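/- arXiv:2402.06391 — 8 statements merged into one kernel-verified Lean document; each statement's English description precedes it below -/
import Mathlib

section
/- Let L be an effect algebra, G a complete Hausdorff topological abelian group, and μ : L → G an additive measure. Then μ is strongly additive (for every orthogonal sequence (a_n) in L, the series Σ μ(a_n) converges in G) if and only if μ is exhaustive (for every orthogonal sequence (a_n) in L, μ(a_n) → 0). -/
open Filter Topology
open scoped ENNReal NNReal

/-- An effect algebra: a partial commutative monoid with orthosupplementation
and the zero-one law. `D a b` means `a ⊕ b` is defined; `add` is the (junk-valued
outside `D`) total extension of `⊕`. -/
structure EffectAlgebra (L : Type*) where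
  D : L → L → Prop
  add : L → L → L
  zero : L
  one : L
  comm_def : ∀ {a b}, D a b → D b a
  comm : ∀ {a b}, D a b → add a b = add b a
  assoc_def₁ : ∀ {a b c}, D b c → D a (add b c) → D a b
  assoc_def₂ : ∀ {a b c}, D b c → D a (add b c) → D (add a b) c
  assoc : ∀ {a b c}, D b c → D a (add b c) → add (add a b) c = add a (add b c)
  orth : ∀ a, ∃! a', D a a' ∧ add a a' = one
  zero_one : ∀ {a}, D one a → a = zero

namespace EffectAlgebra

variable {L : Type*}

/-- The canonical order: `a ≤ b` iff `a ⊕ r = b` for some `r`. -/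
def le (E : EffectAlgebra L) (a b : L) : Prop := ∃ r, E.D a r ∧ E.add a r = b

/-- The orthosupplement `1 ⊖ a`. -/
noncomputable def compl (E : EffectAlgebra L) (a : L) : L := (E.orth a).choose

/-- Partial sums `a 0 ⊕ ⋯ ⊕ a n`. -/
def psum (E : EffectAlgebra L) (a : ℕ → L) : ℕ → L
  | 0 => a 0
  | n + 1 => E.add (E.psum a n) (a (n + 1))

/-- A sequence is orthogonal when all its finite orthosums are defined. -/
def Orthogonal (E : EffectAlgebra L) (a : ℕ → L) : Prop :=
  ∀ n, E.D (E.psum a n) (a (n + 1))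

/-- `s` is the supremum of the set `S` in the canonical order. -/
def IsSup (E : EffectAlgebra L) (S : Set L) (s : L) : Prop :=
  (∀ x ∈ S, E.le x s) ∧ ∀ u, (∀ x ∈ S, E.le x u) → E.le s u

/-- `s = ⊕ₙ a n`: the sequence is orthogonal and `s` is the sup of the finite orthosums. -/
def IsOrthoSum (E : EffectAlgebra L) (a : ℕ → L) (s : L) : Prop :=
  E.Orthogonal a ∧ E.IsSup (Set.range (E.psum a)) s

/-- Additive (finitely additive) measure. -/
def IsMeasure {G : Type*} [AddCommMonoid G] (E : EffectAlgebra L) (μ : L → G) : Prop :=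
  ∀ a b, E.D a b → μ (E.add a b) = μ a + μ b

/-- σ-additivity: `μ (⊕ₙ a n) = Σₙ μ (a n)` whenever the orthosum exists. -/
def SigmaAdditive {G : Type*} [AddCommMonoid G] [TopologicalSpace G]
    (E : EffectAlgebra L) (μ : L → G) : Prop :=
  ∀ a s, E.IsOrthoSum a s →
    Tendsto (fun n => ∑ k ∈ Finset.range n, μ (a k)) atTop (𝓝 (μ s))

/-- Exhaustivity: `μ (a n) → 0` along every orthogonal sequence. -/
def Exhaustive {G : Type*} [AddCommMonoid G] [TopologicalSpace G]
    (E : EffectAlgebra L) (μ : L → G) : Prop :=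
  ∀ a, E.Orthogonal a → Tendsto (fun n => μ (a n)) atTop (𝓝 0)

/-- A generator: every element is the sup of an increasing sequence from `B`. -/
def IsGenerator (E : EffectAlgebra L) (B : Set L) : Prop :=
  ∀ a : L, ∃ b : ℕ → L, (∀ n, b n ∈ B) ∧ (∀ n, E.le (b n) (b (n + 1)))
    ∧ E.IsSup (Set.range b) a

/-- Riesz decomposition property. -/
def RDP (E : EffectAlgebra L) : Prop :=
  ∀ a b c, E.D a b → E.le c (E.add a b) →
    ∃ c₁ c₂, E.D c₁ c₂ ∧ E.add c₁ c₂ = c ∧ E.le c₁ a ∧ E.le c₂ b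

/-- Strong Riesz decomposition property. -/
def sRDP (E : EffectAlgebra L) : Prop :=
  ∀ (a : ℕ → L) (s c : L), E.IsOrthoSum a s → E.le c s →
    ∃ c' : ℕ → L, E.IsOrthoSum c' c ∧ ∀ n, E.le (c' n) (a n)

/-- A natural basis: an orthogonal sequence of minimal nonzero elements with orthosum `1`. -/
def IsNaturalBasis (E : EffectAlgebra L) (b : ℕ → L) : Prop :=
  E.IsOrthoSum b E.one ∧
  ∀ n, b n ≠ E.zero ∧ ∀ c, c ≠ E.zero → E.le c (b n) → c = b n

/-- The set of finite orthosums of elements of the sequence `b`. -/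
def finOrthosums (E : EffectAlgebra L) (b : ℕ → L) : Set L :=
  { x | ∃ c : ℕ → L, (∀ n, c n = b n ∨ c n = E.zero) ∧ E.Orthogonal c ∧
        ∃ N, x = E.psum c N }

/-- A sequence of measures is pointwise convergent. -/
def PtwiseConv (μ : ℕ → L → ℝ) : Prop :=
  ∀ a : L, ∃ x : ℝ, Tendsto (fun i => μ i a) atTop (𝓝 x)

/-- Uniform exhaustivity of a sequence of measures. -/
def UnifExhaustive (E : EffectAlgebra L) (μ : ℕ → L → ℝ) : Prop :=
  ∀ a, E.Orthogonal a →
    TendstoUniformly (fun n (i : ℕ) => μ i (a n)) (fun _ => (0 : ℝ)) atTop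

/-- Uniform strong additivity of a sequence of measures. -/
def UnifStronglyAdditive (E : EffectAlgebra L) (μ : ℕ → L → ℝ) : Prop :=
  ∀ a, E.Orthogonal a → ∃ f : ℕ → ℝ,
    TendstoUniformly (fun n (i : ℕ) => ∑ k ∈ Finset.range n, μ i (a k)) f atTop

/-- The Nikodym property. -/
def Nikodym (E : EffectAlgebra L) : Prop :=
  ∀ μ : ℕ → L → ℝ, (∀ i, E.IsMeasure (μ i)) → (∀ i, ∃ M, ∀ a, |μ i a| ≤ M) →
    (∀ a : L, ∃ M, ∀ i, |μ i a| ≤ M) → ∃ M, ∀ i, ∀ a : L, |μ i a| ≤ M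

/-- The Grothendieck property. -/
def Grothendieck (E : EffectAlgebra L) : Prop :=
  ∀ μ : ℕ → L → ℝ, (∀ i, E.IsMeasure (μ i)) → (∀ i, ∃ M, ∀ a, |μ i a| ≤ M) →
    PtwiseConv μ → (∃ M, ∀ i, ∀ a : L, |μ i a| ≤ M) → E.UnifStronglyAdditive μ

/-- The Vitali-Hahn-Saks property. -/
def VHS (E : EffectAlgebra L) : Prop :=
  ∀ μ : ℕ → L → ℝ, (∀ i, E.IsMeasure (μ i)) → (∀ i, ∃ M, ∀ a, |μ i a| ≤ M) →
    PtwiseConv μ → E.UnifExhaustive μ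

/-- The σ-Nikodym property. -/
def SigmaNikodym (E : EffectAlgebra L) : Prop :=
  ∀ μ : ℕ → L → ℝ, (∀ i, E.IsMeasure (μ i)) → (∀ i, E.SigmaAdditive (μ i)) →
    (∀ i, ∃ M, ∀ a, |μ i a| ≤ M) →
    (∀ a : L, ∃ M, ∀ i, |μ i a| ≤ M) → ∃ M, ∀ i, ∀ a : L, |μ i a| ≤ M

/-- The σ-Vitali-Hahn-Saks property. -/
def SigmaVHS (E : EffectAlgebra L) : Prop :=
  ∀ μ : ℕ → L → ℝ, (∀ i, E.IsMeasure (μ i)) → (∀ i, E.SigmaAdditive (μ i)) →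
    (∀ i, ∃ M, ∀ a, |μ i a| ≤ M) → PtwiseConv μ → E.UnifExhaustive μ

/-- A bounding subset. -/
def Bounding (E : EffectAlgebra L) (B : Set L) : Prop :=
  ∀ (G : Type) [NormedAddCommGroup G], ∀ μ : ℕ → L → G,
    (∀ i, E.IsMeasure (μ i)) → (∀ i, E.SigmaAdditive (μ i)) →
    (∀ a : L, ∃ M, ∀ i, ‖μ i a‖ ≤ M) →
    ((∃ M, ∀ i, ∀ b ∈ B, ‖μ i b‖ ≤ M) ↔ (∃ M, ∀ i, ∀ a : L, ‖μ i a‖ ≤ M))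

/-- A natural subset: a generator closed under orthosums of orthogonal pairs all of whose
orthogonal-complement slices are bounding. -/
def NaturalSubset (E : EffectAlgebra L) (B : Set L) : Prop :=
  E.IsGenerator B ∧ (∀ b ∈ B, ∀ c ∈ B, E.D b c → E.add b c ∈ B) ∧
    ∀ b ∈ B, E.Bounding {c ∈ B | E.D c b}

/-- A natural effect algebra: one admitting a natural subset. -/
def Natural (E : EffectAlgebra L) : Prop := ∃ B, E.NaturalSubset B

/-- The orthogonally sequential property. -/
def OSP (E : EffectAlgebra L) : Prop :=
  ∀ b : ℕ → L, ∃ c : ℕ → L, E.Orthogonal c ∧ (∀ k, E.le (c k) (b k)) ∧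
    ∀ (a : L) (k₀ : ℕ), E.le a (b k₀) → (∀ i, i ≠ k₀ → E.le (b i) (E.compl a)) →
      E.le a (c k₀)

/-- The subsequential interpolation property. -/
def SIP (E : EffectAlgebra L) : Prop :=
  ∀ a : ℕ → L, E.Orthogonal a → ∀ M : Set ℕ, M.Infinite →
    ∃ (x : L) (N : Set ℕ), N ⊆ M ∧ N.Infinite ∧ (∀ n ∈ N, E.le (a n) x) ∧
      ∀ n ∉ N, E.le (a n) (E.compl x)

/-- Iterated orthosum starting from `x`: all steps defined. -/
def OrthoFrom (E : EffectAlgebra L) : L → List L → Prop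
  | _, [] => True
  | x, y :: ys => E.D x y ∧ E.OrthoFrom (E.add x y) ys

/-- The orthosum `x ⊕ y₁ ⊕ ⋯ ⊕ yₙ` of a nonempty list. -/
def psumList (E : EffectAlgebra L) : L → List L → L
  | x, [] => x
  | x, y :: ys => E.psumList (E.add x y) ys

/-- The variation of a measure: the sup over finite decompositions
`e = e₁ ⊕ ⋯ ⊕ eₙ` of `Σ ‖μ eᵢ‖`, valued in `[0,∞]`. -/
noncomputable def variation {G : Type*} [NormedAddCommGroup G]
    (E : EffectAlgebra L) (μ : L → G) (e : L) : ℝ≥0∞ :=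
  sSup { v : ℝ≥0∞ | ∃ (x : L) (xs : List L), E.OrthoFrom x xs ∧ E.psumList x xs = e ∧
    v = ((x :: xs).map fun y => (‖μ y‖₊ : ℝ≥0∞)).sum }

end EffectAlgebra

/-!
If the partial sums of `Σ μ (a n)` converge, consecutive differences give `μ (a n) → 0`.
Conversely, if the partial sums `S n` are not Cauchy, there is a neighbourhood `W` of `0`
and indices `c 0 < c 1 < ⋯` with `S (c (j + 1)) - S (c j) ∉ W` for all `j`. Grouping the
terms of `a` between consecutive indices into blocks `b j = a (c j + 1) ⊕ ⋯ ⊕ a (c (j + 1))`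
yields a new orthogonal sequence with `μ (b j) ∉ W`, contradicting exhaustivity.
-/

theorem tendsto_nhds_zero_of_tendsto_sum_range {G : Type*} [AddCommGroup G] [TopologicalSpace G]
    [IsTopologicalAddGroup G] {f : ℕ → G} {g : G}
    (h : Tendsto (fun n => ∑ k ∈ Finset.range n, f k) atTop (𝓝 g)) :
    Tendsto f atTop (𝓝 0) := by
  have h' := (h.comp (tendsto_add_atTop_nat 1)).sub h
  rw [sub_self] at h'
  exact h'.congr fun n => Finset.sum_range_succ_sub_sum f

theorem cauchySeq_of_forall_strictMono_tendsto_sub {G : Type*} [AddGroup G] [UniformSpace G]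
    [IsUniformAddGroup G] {u : ℕ → G}
    (h : ∀ c : ℕ → ℕ, StrictMono c →
      Tendsto (fun j => u (c (j + 1)) - u (c j)) atTop (𝓝 0)) :
    CauchySeq u := by
  have hbasis :
      (uniformity G).HasBasis (fun W => W ∈ 𝓝 (0 : G)) fun W => {p | p.1 - p.2 ∈ W} := by
    rw [uniformity_eq_comap_nhds_zero_swapped]
    exact (𝓝 (0 : G)).basis_sets.comap _
  rw [hbasis.cauchySeq_iff']
  by_contra! hbad
  obtain ⟨W, hW, hbad⟩ := hbad
  choose next hnext_ge hnext using hbad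
  have hnext_gt : ∀ N, N < next N := fun N =>
    (hnext_ge N).lt_of_ne fun hN => hnext N (by simpa [← hN] using mem_of_mem_nhds hW)
  let c : ℕ → ℕ := fun j => next^[j] 0
  have hc_succ : ∀ j, c (j + 1) = next (c j) := fun j => Function.iterate_succ_apply' next j 0
  have hc : StrictMono c := strictMono_nat_of_lt_succ fun j => hc_succ j ▸ hnext_gt (c j)
  obtain ⟨j, hj⟩ := ((h c hc).eventually hW).exists
  exact hnext (c j) (hc_succ j ▸ hj)

namespace EffectAlgebra

variable {L : Type*} (E : EffectAlgebra L)

theorem assoc_of_D_add {x y z : L} (hxy : E.D x y) (hxyz : E.D (E.add x y) z) :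
    E.D x (E.add y z) ∧ E.add (E.add x y) z = E.add x (E.add y z) := by
  have hz : E.D z (E.add x y) := E.comm_def hxyz
  have hzx : E.D z x := E.assoc_def₁ hxy hz
  have hzxy : E.D (E.add z x) y := E.assoc_def₂ hxy hz
  have hyzx : E.D y (E.add z x) := E.comm_def hzxy
  have hyzx' : E.D (E.add y z) x := E.assoc_def₂ hzx hyzx
  refine ⟨E.comm_def hyzx', ?_⟩
  calc E.add (E.add x y) z = E.add z (E.add x y) := E.comm hxyz
    _ = E.add (E.add z x) y := (E.assoc hxy hz).symm
    _ = E.add y (E.add z x) := E.comm hzxy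
    _ = E.add (E.add y z) x := (E.assoc hzx hyzx).symm
    _ = E.add x (E.add y z) := E.comm hyzx'

variable {E} {a : ℕ → L}

theorem Orthogonal.psum_add_psum_shift (ha : E.Orthogonal a) (m k : ℕ) :
    E.D (E.psum a m) (E.psum (fun i => a (m + 1 + i)) k) ∧
      E.add (E.psum a m) (E.psum (fun i => a (m + 1 + i)) k) = E.psum a (m + 1 + k) := by
  induction k with
  | zero => exact ⟨ha m, rfl⟩
  | succ k ih =>
    obtain ⟨hD, hadd⟩ := ih
    have hnext :
        E.D (E.add (E.psum a m) (E.psum (fun i => a (m + 1 + i)) k)) (a (m + 1 + k + 1)) :=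
      hadd ▸ ha (m + 1 + k)
    obtain ⟨hD', hassoc⟩ := E.assoc_of_D_add hD hnext
    exact ⟨hD', hassoc.symm.trans (by rw [hadd]; rfl)⟩

/-- Block `j + 1` is `a (c j + 1) ⊕ ⋯ ⊕ a (c (j + 1))`; the truncated subtraction makes this
meaningful only when `c j < c (j + 1)`. -/
def blocks (E : EffectAlgebra L) (a : ℕ → L) (c : ℕ → ℕ) : ℕ → L
  | 0 => E.psum a (c 0)
  | j + 1 => E.psum (fun i => a (c j + 1 + i)) (c (j + 1) - c j - 1)

variable {c : ℕ → ℕ}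

theorem Orthogonal.psum_add_blocks (ha : E.Orthogonal a) (hc : StrictMono c) (j : ℕ) :
    E.D (E.psum a (c j)) (E.blocks a c (j + 1)) ∧
      E.add (E.psum a (c j)) (E.blocks a c (j + 1)) = E.psum a (c (j + 1)) := by
  have hlen : c j + 1 + (c (j + 1) - c j - 1) = c (j + 1) := by
    have : c j < c (j + 1) := hc (Nat.lt_add_one j)
    omega
  simpa only [blocks, hlen] using ha.psum_add_psum_shift (c j) (c (j + 1) - c j - 1)

theorem Orthogonal.psum_blocks (ha : E.Orthogonal a) (hc : StrictMono c) :
    ∀ j, E.psum (E.blocks a c) j = E.psum a (c j)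
  | 0 => rfl
  | j + 1 => by rw [psum, ha.psum_blocks hc j, (ha.psum_add_blocks hc j).2]

theorem Orthogonal.blocks (ha : E.Orthogonal a) (hc : StrictMono c) :
    E.Orthogonal (E.blocks a c) := fun j => by
  rw [ha.psum_blocks hc j]
  exact (ha.psum_add_blocks hc j).1

variable {G : Type*} [AddCommGroup G] {μ : L → G}

theorem IsMeasure.map_psum (hμ : E.IsMeasure μ) (ha : E.Orthogonal a) :
    ∀ n, μ (E.psum a n) = ∑ k ∈ Finset.range (n + 1), μ (a k)
  | 0 => by simp [psum]
  | n + 1 => by rw [psum, hμ _ _ (ha n), hμ.map_psum ha n, Finset.sum_range_succ _ (n + 1)]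

theorem IsMeasure.map_blocks_succ (hμ : E.IsMeasure μ) (ha : E.Orthogonal a) (hc : StrictMono c)
    (j : ℕ) :
    μ (E.blocks a c (j + 1)) = ∑ k ∈ Finset.range (c (j + 1) + 1), μ (a k)
      - ∑ k ∈ Finset.range (c j + 1), μ (a k) := by
  obtain ⟨hD, hadd⟩ := ha.psum_add_blocks hc j
  rw [← hμ.map_psum ha, ← hμ.map_psum ha, ← hadd, hμ _ _ hD, add_sub_cancel_left]

end EffectAlgebra

open EffectAlgebra in
theorem stmt3_general {L : Type*} {G : Type*} [AddCommGroup G] [UniformSpace G]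
    [IsUniformAddGroup G] [CompleteSpace G]
    (E : EffectAlgebra L) (μ : L → G) (hμ : E.IsMeasure μ) :
    (∀ a : ℕ → L, E.Orthogonal a →
        ∃ g : G, Filter.Tendsto (fun n => ∑ k ∈ Finset.range n, μ (a k))
          Filter.atTop (nhds g)) ↔ E.Exhaustive μ := by
  refine ⟨fun h a ha => ?_, fun hex a ha => cauchySeq_tendsto_of_complete ?_⟩
  · obtain ⟨g, hg⟩ := h a ha
    exact tendsto_nhds_zero_of_tendsto_sum_range hg
  · refine (cauchySeq_shift 1).1 (cauchySeq_of_forall_strictMono_tendsto_sub fun c hc => ?_)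
    exact ((hex _ (ha.blocks hc)).comp (tendsto_add_atTop_nat 1)).congr
      (hμ.map_blocks_succ ha hc)

open EffectAlgebra in
/-- For a measure valued in a complete Hausdorff topological abelian group,
strong additivity is equivalent to exhaustivity. -/
theorem stmt3 {L : Type*} {G : Type*} [AddCommGroup G] [UniformSpace G]
    [IsUniformAddGroup G] [CompleteSpace G] [T2Space G]
    (E : EffectAlgebra L) (μ : L → G) (hμ : E.IsMeasure μ) :
    (∀ a : ℕ → L, E.Orthogonal a →
        ∃ g : G, Filter.Tendsto (fun n => ∑ k ∈ Finset.range n, μ (a k))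
          Filter.atTop (nhds g)) ↔ E.Exhaustive μ :=
  stmt3_general E μ hμ
end

section
/- There exist an effect algebra L and a real-valued additive measure μ on L such that for every orthogonal sequence (a_n) in L the series Σ |μ(a_n)| converges, yet μ is unbounded (sup_{a∈L} |μ(a)| = ∞). -/
open Filter Topology
open scoped ENNReal NNReal

namespace Stmt5Aux

/-- `D` relation on `Option ℤ`: defined when one side is zero (`some 0`) or
the two sides are a complementary pair `some n`, `some (-n)`. -/
def Dz (a b : Option ℤ) : Prop :=
  a = some 0 ∨ b = some 0 ∨ ∃ n : ℤ, n ≠ 0 ∧ a = some n ∧ b = some (-n)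

/-- Total extension of the partial sum. -/
def addz (a b : Option ℤ) : Option ℤ :=
  if a = some 0 then b else if b = some 0 then a else none

lemma addz_zl (b : Option ℤ) : addz (some 0) b = b := by simp [addz]

lemma addz_zr (a : Option ℤ) : addz a (some 0) = a := by
  by_cases h : a = some 0 <;> simp [addz, h]

lemma Dz_none_iff (b : Option ℤ) : Dz none b ↔ b = some 0 := by
  constructor
  · rintro (h | h | ⟨n, hn, h, _⟩) <;> simp_all
  · rintro rfl; exact Or.inr (Or.inl rfl)

lemma Dz_none_iff' (a : Option ℤ) : Dz a none ↔ a = some 0 := by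
  constructor
  · rintro (h | h | ⟨n, hn, _, h⟩) <;> simp_all
  · rintro rfl; exact Or.inl rfl

lemma addz_comm (a b : Option ℤ) : addz a b = addz b a := by
  unfold addz; split_ifs <;> simp_all

noncomputable def Ez : EffectAlgebra (Option ℤ) where
  D := Dz
  add := addz
  zero := some 0
  one := none
  comm_def := by
    rintro a b (h | h | ⟨n, hn, ha, hb⟩)
    · exact Or.inr (Or.inl h)
    · exact Or.inl h
    · exact Or.inr (Or.inr ⟨-n, by simpa using hn, hb, by simpa using ha⟩)
  comm := fun {a b} _ => addz_comm a b
  assoc_def₁ := by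
    rintro a b c (hb | hc | ⟨n, hn, hb, hc⟩) h2
    · exact Or.inr (Or.inl hb)
    · subst hc; rwa [addz_zr] at h2
    · subst hb; subst hc
      have : addz (some n) (some (-n)) = none := by
        simp [addz, hn]
      rw [this, Dz_none_iff'] at h2
      exact Or.inl h2
  assoc_def₂ := by
    rintro a b c (hb | hc | ⟨n, hn, hb, hc⟩) h2
    · subst hb
      rw [addz_zr]
      rwa [addz_zl] at h2
    · subst hc
      exact Or.inr (Or.inl rfl)
    · subst hb; subst hc
      have : addz (some n) (some (-n)) = none := by simp [addz, hn]
      rw [this, Dz_none_iff'] at h2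
      subst h2
      rw [addz_zl]
      exact Or.inr (Or.inr ⟨n, hn, rfl, rfl⟩)
  assoc := by
    rintro a b c (hb | hc | ⟨n, hn, hb, hc⟩) h2
    · subst hb; rw [addz_zr, addz_zl]
    · subst hc; rw [addz_zr, addz_zr]
    · subst hb; subst hc
      have h3 : addz (some n) (some (-n)) = none := by simp [addz, hn]
      rw [h3, Dz_none_iff'] at h2
      subst h2
      rw [addz_zl, addz_zl]
  orth := by
    intro a
    match a with
    | none =>
        refine ⟨some 0, ⟨Or.inr (Or.inl rfl), ?_⟩, ?_⟩
        · simp [addz]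
        · rintro y ⟨hy, -⟩
          exact (Dz_none_iff y).mp hy
    | some n =>
        by_cases hn : n = 0
        · subst hn
          refine ⟨none, ⟨Or.inl rfl, by simp [addz]⟩, ?_⟩
          rintro y ⟨-, hy⟩
          rwa [addz_zl] at hy
        · refine ⟨some (-n), ⟨Or.inr (Or.inr ⟨n, hn, rfl, rfl⟩), by simp [addz, hn]⟩, ?_⟩
          rintro y ⟨hy, hy2⟩
          rcases hy with h | h | ⟨m, hm, hab, hy'⟩
          · simp_all
          · subst h; rw [addz_zr] at hy2; simp_all
          · obtain rfl : m = n := by simpa using hab.symm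
            exact hy'
  zero_one := fun {a} h => (Dz_none_iff a).mp h

lemma Ez_D : Ez.D = Dz := rfl
lemma Ez_add : Ez.add = addz := rfl

/-- The measure. -/
noncomputable def μz : Option ℤ → ℝ
  | none => 0
  | some n => (n : ℝ)

lemma μz_measure : Ez.IsMeasure μz := by
  rintro a b (h | h | ⟨n, hn, ha, hb⟩)
  · subst h; rw [Ez_add, addz_zl]; simp [μz]
  · subst h; rw [Ez_add, addz_zr]; simp [μz]
  · subst ha; subst hb
    have : addz (some n) (some (-n)) = none := by simp [addz, hn]
    rw [Ez_add, this]
    simp [μz]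

/-- Key structural lemma: any orthogonal sequence is eventually zero. -/
lemma orth_eventually_zero (a : ℕ → Option ℤ) (ha : Ez.Orthogonal a) :
    ∃ N : ℕ, ∀ m, N < m → a m = some 0 := by
  classical
  set P : ℕ → Option ℤ := Ez.psum a with hP
  have hstep : ∀ n, P (n + 1) = addz (P n) (a (n + 1)) := fun n => rfl
  have hD : ∀ n, Dz (P n) (a (n + 1)) := ha
  -- once `none`, always `none` with zero terms afterwards
  by_cases hnone : ∃ n, P n = none
  · obtain ⟨n, hn⟩ := hnone
    refine ⟨n, ?_⟩
    have key : ∀ m, P (n + m) = none ∧ (1 ≤ m → a (n + m) = some 0) := by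
      intro m
      induction m with
      | zero => exact ⟨hn, by omega⟩
      | succ k ih =>
        have hz : a (n + k + 1) = some 0 := by
          have := hD (n + k)
          rw [ih.1, Dz_none_iff] at this
          exact this
        constructor
        · rw [show n + (k+1) = (n+k) + 1 by ring, hstep, ih.1, hz, addz_zr]
        · intro _
          rw [show n + (k+1) = (n+k) + 1 by ring]
          exact hz
    intro m hm
    obtain ⟨j, rfl⟩ : ∃ j, m = n + j := ⟨m - n, by omega⟩
    exact (key j).2 (by omega)
  · push_neg at hnone
    by_cases hz : ∀ n, P n = some 0
    · refine ⟨0, fun m hm => ?_⟩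
      obtain ⟨k, rfl⟩ : ∃ k, m = k + 1 := ⟨m - 1, by omega⟩
      have := hstep k
      rw [hz (k+1), hz k, addz_zl] at this
      exact this.symm
    · push_neg at hz
      obtain ⟨n, hn⟩ := hz
      obtain ⟨k, hk⟩ : ∃ k : ℤ, P n = some k := by
        cases h : P n with
        | none => exact absurd h (hnone n)
        | some k => exact ⟨k, rfl⟩
      have hk0 : k ≠ 0 := by rintro rfl; exact hn hk
      refine ⟨n, ?_⟩
      have key : ∀ m, P (n + m) = some k ∧ (1 ≤ m → a (n + m) = some 0) := by
        intro m
        induction m with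
        | zero => exact ⟨hk, by omega⟩
        | succ j ih =>
          have hD' := hD (n + j)
          rw [ih.1] at hD'
          have hz' : a (n + j + 1) = some 0 := by
            rcases hD' with h | h | ⟨m', hm', hab, hb⟩
            · simp_all
            · exact h
            · exfalso
              obtain rfl : m' = k := by simpa using hab.symm
              have : P (n + j + 1) = none := by
                rw [hstep, ih.1, hb]
                simp [addz, hk0]
              exact hnone _ this
          constructor
          · rw [show n + (j+1) = (n+j) + 1 by ring, hstep, ih.1, hz', addz_zr]
          · intro _
            rw [show n + (j+1) = (n+j) + 1 by ring]
            exact hz'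
      intro m hm
      obtain ⟨j, rfl⟩ : ∃ j, m = n + j := ⟨m - n, by omega⟩
      exact (key j).2 (by omega)

end Stmt5Aux

open EffectAlgebra in
/-- There is a real-valued measure on an effect algebra which is absolutely
additive but unbounded. -/
theorem stmt5 :
    ∃ (L : Type) (E : EffectAlgebra L) (μ : L → ℝ), E.IsMeasure μ ∧
      (∀ a : ℕ → L, E.Orthogonal a → Summable (fun n => |μ (a n)|)) ∧
      ¬ ∃ M : ℝ, ∀ a : L, |μ a| ≤ M := by
  classical
  refine ⟨Option ℤ, Stmt5Aux.Ez, Stmt5Aux.μz, Stmt5Aux.μz_measure, ?_, ?_⟩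
  · intro a ha
    obtain ⟨N, hN⟩ := Stmt5Aux.orth_eventually_zero a ha
    apply summable_of_ne_finset_zero (s := Finset.range (N + 1))
    intro m hm
    rw [hN m (by simpa using hm)]
    simp [Stmt5Aux.μz]
  · rintro ⟨M, hM⟩
    have h := hM (some (⌈|M|⌉ + 1))
    have h2 : (⌈|M|⌉ : ℝ) + 1 ≤ |M| + 1 + 1 := by
      have := Int.ceil_lt_add_one (|M|)
      linarith
    have h3 : |Stmt5Aux.μz (some (⌈|M|⌉ + 1))| = (⌈|M|⌉ : ℝ) + 1 := by
      have h4 : (0:ℝ) ≤ (⌈|M|⌉ : ℝ) + 1 := by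
        have : (0:ℝ) ≤ (⌈|M|⌉ : ℝ) := by
          exact_mod_cast Int.ceil_nonneg (abs_nonneg M)
        linarith
      simp only [Stmt5Aux.μz]
      push_cast
      rwa [abs_of_nonneg]
    rw [h3] at h
    have h5 : |M| ≤ (⌈|M|⌉ : ℝ) := Int.le_ceil _
    have h6 : M ≤ |M| := le_abs_self M
    linarith
end

section
/- Let L be an effect algebra, G a normed abelian group, and μ : L → G a σ-additive measure. If B ⊆ L is a generator of L and μ is bounded on B (i.e., there is M with ‖μ(b)‖ ≤ M for all b ∈ B), then μ is bounded on all of L. -/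
open Filter Topology
open scoped ENNReal NNReal

open EffectAlgebra in
/-- A σ-additive measure valued in a normed abelian group which is bounded on a
generator of the effect algebra is bounded. -/
theorem stmt6 {L : Type*} {G : Type*} [NormedAddCommGroup G]
    (E : EffectAlgebra L) (μ : L → G) (hμ : E.IsMeasure μ) (hσ : E.SigmaAdditive μ)
    (B : Set L) (hB : E.IsGenerator B) (M : ℝ) (hM : ∀ b ∈ B, ‖μ b‖ ≤ M) :
    ∃ M' : ℝ, ∀ a : L, ‖μ a‖ ≤ M' := by
  refine ⟨M, fun a => ?_⟩
  obtain ⟨b, hbB, hmono, hsup⟩ := hB a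
  -- build the orthogonal difference sequence
  choose r hrD hradd using hmono
  set c : ℕ → L := fun n => Nat.rec (b 0) (fun k _ => r k) n with hc
  have hpsum : ∀ n, E.psum c n = b n := by
    intro n
    induction n with
    | zero => rfl
    | succ k ih =>
      show E.add (E.psum c k) (r k) = b (k + 1)
      rw [ih, hradd]
  have horth : E.Orthogonal c := by
    intro n
    show E.D (E.psum c n) (r n)
    rw [hpsum]; exact hrD n
  have hrange : Set.range (E.psum c) = Set.range b := by
    ext x; constructor
    · rintro ⟨n, rfl⟩; exact ⟨n, (hpsum n).symm⟩
    · rintro ⟨n, rfl⟩; exact ⟨n, hpsum n⟩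
  have hos : E.IsOrthoSum c a := ⟨horth, by rw [hrange]; exact hsup⟩
  have htend := hσ c a hos
  -- partial sums equal μ (b n)
  have hsums : ∀ n, ∑ k ∈ Finset.range (n + 1), μ (c k) = μ (b n) := by
    intro n
    induction n with
    | zero => simp [hc]
    | succ k ih =>
      rw [Finset.sum_range_succ, ih, show c (k + 1) = r k from rfl, ← hradd k,
        hμ _ _ (hrD k)]
  have htend' : Tendsto (fun n => μ (b n)) atTop (𝓝 (μ a)) := by
    have := htend.comp (tendsto_add_atTop_nat 1)
    simpa [Function.comp_def, hsums] using this
  have : Tendsto (fun n => ‖μ (b n)‖) atTop (𝓝 ‖μ a‖) := htend'.norm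
  exact le_of_tendsto this (Filter.Eventually.of_forall fun n => hM _ (hbB n))
end

section
/- Let L be an effect algebra with the strong Riesz Decomposition Property and let (b_n) be a natural basis of L. Then for every a ∈ L there exists a subset S ⊆ ℕ such that a = ⊕_{n∈S} b_n. Consequently, the set of finite orthosums of elements of the basis is a generator of L. -/
open Filter Topology
open scoped ENNReal NNReal

open EffectAlgebra in
/-- In an effect algebra with the strong Riesz decomposition property and a natural
basis, every element is the orthosum of a subfamily of the basis, and the finite
orthosums of basis elements form a generator. -/
theorem stmt7 {L : Type*} (E : EffectAlgebra L) (hR : E.sRDP)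
    (b : ℕ → L) (hb : E.IsNaturalBasis b) :
    (∀ a : L, ∃ c : ℕ → L, (∀ n, c n = b n ∨ c n = E.zero) ∧ E.IsOrthoSum c a) ∧
      E.IsGenerator (E.finOrthosums b) := by
  have part1 : ∀ a : L, ∃ c : ℕ → L, (∀ n, c n = b n ∨ c n = E.zero) ∧ E.IsOrthoSum c a := by
    intro a
    obtain ⟨a', ⟨h1, h2⟩, -⟩ := E.orth a
    obtain ⟨c, hc, hcn⟩ := hR b E.one a hb.1 ⟨a', h1, h2⟩
    refine ⟨c, fun n => ?_, hc⟩
    by_cases h : c n = E.zero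
    · exact Or.inr h
    · exact Or.inl ((hb.2 n).2 (c n) h (hcn n))
  refine ⟨part1, fun a => ?_⟩
  obtain ⟨c, hc1, hc2⟩ := part1 a
  exact ⟨E.psum c, fun n => ⟨c, hc1, hc2.1, n, rfl⟩,
    fun n => ⟨c (n + 1), hc2.1 n, rfl⟩, hc2.2⟩
end

section
/- Let L be an effect algebra with the strong Riesz Decomposition Property admitting a natural basis (b_n), and let X be a finite-dimensional Banach space. Then every σ-additive measure μ : L → X is bounded: sup_{a∈L} ‖μ(a)‖ < ∞. -/
open Filter Topology
open scoped ENNReal NNReal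

/-!
By the strong Riesz decomposition property every `a` is an orthosum `⊕ cₙ` with `cₙ ≤ bₙ`, and
minimality of the basis elements forces `cₙ ∈ {0, bₙ}`; hence `‖μ a‖ ≤ ∑ ‖μ bₙ‖` once this series
converges, which in finite dimension is unconditional convergence of `∑ μ bₙ`. If that failed,
the Cauchy criterion would give finite sets `Tₖ` in consecutive blocks `(mₖ, mₖ₊₁]` with
`∑_{n ∈ Tₖ} μ bₙ` staying away from `0`. But regrouping `b` along the sets
`[0, m₀], T₀, (m₀, m₁] \ T₀, T₁, …` yields an orthogonal sequence with orthosum `1`, whose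
terms must tend to `0` by σ-additivity.
-/

theorem tendsto_zero_of_tendsto_sum_range {G : Type*} [AddCommGroup G] [TopologicalSpace G]
    [IsTopologicalAddGroup G] {f : ℕ → G} {a : G}
    (h : Tendsto (fun n => ∑ k ∈ Finset.range n, f k) atTop (𝓝 a)) :
    Tendsto f atTop (𝓝 0) := by
  simpa [Finset.sum_range_succ] using (h.comp (tendsto_add_atTop_nat 1)).sub h

theorem summable_of_tendsto_sum_blocks {G : Type*} [AddCommGroup G] [UniformSpace G]
    [IsUniformAddGroup G] [CompleteSpace G] {x : ℕ → G}
    (h : ∀ m : ℕ → ℕ, StrictMono m → ∀ T : ℕ → Finset ℕ,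
      (∀ k, ↑(T k) ⊆ Set.Ioc (m k) (m (k + 1))) →
        Tendsto (fun k => ∑ n ∈ T k, x n) atTop (𝓝 0)) :
    Summable x := by
  rw [summable_iff_vanishing]
  by_contra! hx
  obtain ⟨e, he, hbad⟩ := hx
  have hfar : ∀ M, ∃ t : Finset ℕ, (∀ n ∈ t, M < n) ∧ ∑ n ∈ t, x n ∉ e := fun M => by
    obtain ⟨t, hdisj, ht⟩ := hbad (Finset.range (M + 1))
    exact ⟨t, fun n hn => by simpa using Finset.disjoint_left.mp hdisj hn, ht⟩
  choose t ht_gt ht_notMem using hfar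
  let m : ℕ → ℕ := fun k => Nat.rec 0 (fun _ mk => max (mk + 1) ((t mk).sup id)) k
  have hm : ∀ k, m (k + 1) = max (m k + 1) ((t (m k)).sup id) := fun _ => rfl
  have hmono : StrictMono m := strictMono_nat_of_lt_succ fun k => by rw [hm]; omega
  have hT : ∀ k, ↑(t (m k)) ⊆ Set.Ioc (m k) (m (k + 1)) := fun k n hn =>
    ⟨ht_gt _ n hn, (Finset.le_sup (f := id) hn).trans (hm k ▸ le_max_right _ _)⟩
  obtain ⟨k, hk⟩ := ((h m hmono _ hT).eventually he).exists
  exact ht_notMem _ hk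

namespace EffectAlgebra

variable {L : Type*} (E : EffectAlgebra L)

section Basic

lemma D_one_zero : E.D E.one E.zero ∧ E.add E.one E.zero = E.one := by
  obtain ⟨e, ⟨hD, hA⟩, -⟩ := E.orth E.one
  obtain rfl := E.zero_one hD
  exact ⟨hD, hA⟩

lemma compl_spec (a : L) : E.D a (E.compl a) ∧ E.add a (E.compl a) = E.one :=
  (E.orth a).choose_spec.1

lemma le_one (a : L) : E.le a E.one :=
  ⟨E.compl a, E.compl_spec a⟩

lemma zero_D_add_compl (a : L) : E.D E.zero (E.add a (E.compl a)) := by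
  rw [(E.compl_spec a).2]
  exact E.comm_def E.D_one_zero.1

lemma D_zero (a : L) : E.D a E.zero :=
  E.comm_def (E.assoc_def₁ (E.compl_spec a).1 (E.zero_D_add_compl a))

protected lemma add_zero (a : L) : E.add a E.zero = a := by
  obtain ⟨hD, hA⟩ := E.compl_spec a
  have h0 := E.zero_D_add_compl a
  have h0a := E.assoc_def₂ hD h0
  -- `a` and `0 ⊕ a` are both orthosupplements of `1 ⊖ a`
  obtain ⟨x, -, hx⟩ := E.orth (E.compl a)
  have ha : a = x := hx a ⟨E.comm_def hD, by rw [E.comm (E.comm_def hD), hA]⟩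
  have h0a' : E.add E.zero a = x := by
    refine hx _ ⟨E.comm_def h0a, ?_⟩
    rw [E.comm (E.comm_def h0a), E.assoc hD h0, E.comm h0, hA, E.D_one_zero.2]
  rw [E.comm (E.D_zero a), h0a', ha]

lemma assoc_of_D_add_s9 {a b c : L} (hab : E.D a b) (h : E.D (E.add a b) c) :
    E.D b c ∧ E.D a (E.add b c) ∧ E.add (E.add a b) c = E.add a (E.add b c) := by
  have hc : E.D c (E.add a b) := E.comm_def h
  have hca : E.D c a := E.assoc_def₁ hab hc
  have hbca : E.D b (E.add c a) := by
    have h' := E.assoc_def₂ hab hc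
    rw [E.comm hca] at h'
    rw [E.comm hca]
    exact E.comm_def h'
  have hbc : E.D b c := E.assoc_def₁ hca hbca
  have hbc_a : E.D (E.add b c) a := E.assoc_def₂ hca hbca
  refine ⟨hbc, E.comm_def hbc_a, ?_⟩
  calc E.add (E.add a b) c = E.add (E.add b a) c := by rw [E.comm hab]
    _ = E.add b (E.add a c) := E.assoc (E.comm_def hca) (by rwa [← E.comm hca])
    _ = E.add (E.add b c) a := by rw [E.comm (E.comm_def hca), E.assoc hca hbca]
    _ = E.add a (E.add b c) := E.comm hbc_a

lemma add_right_comm_of_D_add {a b c : L} (hab : E.D a b) (h : E.D (E.add a b) c) :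
    E.D (E.add a c) b ∧ E.add (E.add a b) c = E.add (E.add a c) b := by
  obtain ⟨hbc, habc, he⟩ := E.assoc_of_D_add_s9 hab h
  have hacb : E.D a (E.add c b) := by rwa [E.comm (E.comm_def hbc)]
  have hcb : E.D c b := E.comm_def hbc
  refine ⟨E.assoc_def₂ hcb hacb, ?_⟩
  rw [he, E.comm hbc, E.assoc hcb hacb]

protected lemma le_trans {a b c : L} (hab : E.le a b) (hbc : E.le b c) : E.le a c := by
  obtain ⟨r, hr, rfl⟩ := hab
  obtain ⟨s, hs, rfl⟩ := hbc
  obtain ⟨-, hars, he⟩ := E.assoc_of_D_add_s9 hr hs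
  exact ⟨E.add r s, hars, he.symm⟩

lemma D_of_le_left {a b c : L} (hab : E.le a b) (hbc : E.D b c) : E.D a c := by
  obtain ⟨r, hr, rfl⟩ := hab
  rw [E.comm hr] at hbc
  exact (E.assoc_of_D_add_s9 (E.comm_def hr) hbc).1

lemma psum_congr {a a' : ℕ → L} {n : ℕ} (h : ∀ k ≤ n, a k = a' k) :
    E.psum a n = E.psum a' n := by
  induction n with
  | zero => exact h 0 le_rfl
  | succ n ih => simp only [psum, ih fun k hk => h k (hk.trans n.le_succ), h (n + 1) le_rfl]

variable {G : Type*} [AddCommGroup G] {μ : L → G}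

lemma measure_zero (hμ : E.IsMeasure μ) : μ E.zero = 0 := by
  simpa [E.add_zero] using hμ E.zero E.zero (E.D_zero E.zero)

lemma measure_psum (hμ : E.IsMeasure μ) {a : ℕ → L} (ha : E.Orthogonal a) (n : ℕ) :
    μ (E.psum a n) = ∑ k ∈ Finset.range (n + 1), μ (a k) := by
  induction n with
  | zero => simp [psum]
  | succ n ih => rw [psum, hμ _ _ (ha n), ih, Finset.sum_range_succ _ (n + 1)]

end Basic

section Selection

variable {E} {b : ℕ → L}

open Classical in
noncomputable def sel (E : EffectAlgebra L) (b : ℕ → L) (S : Set ℕ) (n : ℕ) : L :=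
  if n ∈ S then b n else E.zero

lemma psum_sel_univ (N : ℕ) : E.psum (E.sel b Set.univ) N = E.psum b N :=
  E.psum_congr fun k _ => if_pos (Set.mem_univ k)

lemma psum_sel_union (hb : E.Orthogonal b) (N : ℕ) {S T : Set ℕ} (hST : Disjoint S T) :
    E.D (E.psum (E.sel b S) N) (E.psum (E.sel b T) N) ∧
      E.add (E.psum (E.sel b S) N) (E.psum (E.sel b T) N) = E.psum (E.sel b (S ∪ T)) N := by
  induction N generalizing S T with
  | zero =>
    by_cases hS : 0 ∈ S
    · have hT : 0 ∉ T := hST.notMem_of_mem_left hS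
      simp only [psum, sel, hS, hT, Set.mem_union, true_or, if_true, if_false]
      exact ⟨E.D_zero _, E.add_zero _⟩
    by_cases hT : 0 ∈ T
    · simp only [psum, sel, hS, hT, Set.mem_union, or_true, if_true, if_false]
      exact ⟨E.comm_def (E.D_zero _), by rw [← E.comm (E.D_zero _), E.add_zero]⟩
    · simp only [psum, sel, hS, hT, Set.mem_union, or_self, if_false]
      exact ⟨E.D_zero _, E.add_zero _⟩
  | succ N ih =>
    obtain ⟨hD, hA⟩ := ih hST
    have hle : E.le (E.psum (E.sel b (S ∪ T)) N) (E.psum b N) := by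
      refine ⟨_, (ih disjoint_compl_right).1, ?_⟩
      rw [(ih disjoint_compl_right).2, Set.union_compl_self, psum_sel_univ]
    have hDb : E.D (E.add (E.psum (E.sel b S) N) (E.psum (E.sel b T) N)) (b (N + 1)) :=
      hA ▸ E.D_of_le_left hle (hb N)
    by_cases hS : N + 1 ∈ S
    · have hT : N + 1 ∉ T := hST.notMem_of_mem_left hS
      obtain ⟨hD', he⟩ := E.add_right_comm_of_D_add hD hDb
      simp only [psum, sel, hS, hT, Set.mem_union, true_or, if_true, if_false, E.add_zero]
      exact ⟨hD', by rw [← he, hA]⟩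
    by_cases hT : N + 1 ∈ T
    · obtain ⟨-, hD', he⟩ := E.assoc_of_D_add_s9 hD hDb
      simp only [psum, sel, hS, hT, Set.mem_union, or_true, if_true, if_false, E.add_zero]
      exact ⟨hD', by rw [← he, hA]⟩
    · simp only [psum, sel, hS, hT, Set.mem_union, or_self, if_false, E.add_zero]
      exact ⟨hD, hA⟩

lemma psum_sel_le (hb : E.Orthogonal b) (N : ℕ) (S : Set ℕ) :
    E.le (E.psum (E.sel b S) N) (E.psum b N) := by
  obtain ⟨hD, hA⟩ := psum_sel_union hb N (disjoint_compl_right (a := S))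
  exact ⟨_, hD, by rw [hA, Set.union_compl_self, psum_sel_univ]⟩

lemma orthogonal_sel (hb : E.Orthogonal b) (S : Set ℕ) : E.Orthogonal (E.sel b S) := by
  intro N
  by_cases hS : N + 1 ∈ S
  · simpa only [sel, hS, if_true] using E.D_of_le_left (psum_sel_le hb N S) (hb N)
  · simpa only [sel, hS, if_false] using E.D_zero _

lemma psum_sel_eq_of_subset_Iic {S : Set ℕ} {N M : ℕ} (hS : S ⊆ Set.Iic N) (hNM : N ≤ M) :
    E.psum (E.sel b S) M = E.psum (E.sel b S) N := by
  induction M, hNM using Nat.le_induction with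
  | base => rfl
  | succ M hNM ih =>
    have hM : M + 1 ∉ S := fun h => absurd (Set.mem_Iic.mp (hS h)) (by omega)
    simp only [psum, sel, hM, if_false, E.add_zero]
    exact ih

end Selection

section FinsetSum

variable {E} {b : ℕ → L}

/-- The orthosum `⊕_{i ∈ s} b i` of a finite subfamily of `b`. -/
noncomputable def osum (E : EffectAlgebra L) (b : ℕ → L) (s : Finset ℕ) : L :=
  E.psum (E.sel b s) (s.sup id)

lemma psum_sel_eq_osum {s : Finset ℕ} {N : ℕ} (hN : ∀ n ∈ s, n ≤ N) :
    E.psum (E.sel b s) N = E.osum b s :=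
  psum_sel_eq_of_subset_Iic (fun _ => Finset.le_sup (f := id)) (Finset.sup_le hN)

lemma osum_union (hb : E.Orthogonal b) {s t : Finset ℕ} (hst : Disjoint s t) :
    E.D (E.osum b s) (E.osum b t) ∧ E.add (E.osum b s) (E.osum b t) = E.osum b (s ∪ t) := by
  have hN : ∀ u ⊆ s ∪ t, ∀ n ∈ u, n ≤ (s ∪ t).sup id :=
    fun u hu n hn => Finset.le_sup (f := id) (hu hn)
  rw [← psum_sel_eq_osum (hN s Finset.subset_union_left),
    ← psum_sel_eq_osum (hN t Finset.subset_union_right),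
    ← psum_sel_eq_osum (hN _ subset_rfl), Finset.coe_union]
  exact psum_sel_union hb _ (Finset.disjoint_coe.mpr hst)

lemma osum_le_osum (hb : E.Orthogonal b) {s t : Finset ℕ} (hst : s ⊆ t) :
    E.le (E.osum b s) (E.osum b t) := by
  obtain ⟨hD, hA⟩ := osum_union hb (Finset.disjoint_sdiff (s := s) (t := t))
  exact ⟨_, hD, by rw [hA, Finset.union_sdiff_of_subset hst]⟩

lemma osum_range (N : ℕ) : E.osum b (Finset.range (N + 1)) = E.psum b N := by
  rw [← psum_sel_eq_osum (N := N) fun n hn => Nat.lt_succ_iff.mp (Finset.mem_range.mp hn)]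
  exact E.psum_congr fun k hk => if_pos (by simpa using Nat.lt_succ_of_le hk)

lemma measure_osum {G : Type*} [AddCommGroup G] {μ : L → G} (hμ : E.IsMeasure μ)
    (hb : E.Orthogonal b) (s : Finset ℕ) : μ (E.osum b s) = ∑ i ∈ s, μ (b i) := by
  classical
  have hs : s ⊆ Finset.range (s.sup id + 1) :=
    fun n hn => Finset.mem_range_succ_iff.mpr (Finset.le_sup (f := id) hn)
  have hsel : ∀ k, μ (E.sel b s k) = if k ∈ s then μ (b k) else 0 := by
    intro k
    by_cases hk : k ∈ s <;> simp [sel, hk, E.measure_zero hμ]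
  rw [osum, E.measure_psum hμ (orthogonal_sel hb s), Finset.sum_congr rfl fun k _ => hsel k,
    Finset.sum_ite_mem, Finset.inter_eq_right.mpr hs]

end FinsetSum

section Regrouping

variable {E} {b : ℕ → L} {U : ℕ → Finset ℕ}

lemma psum_osum_disjointed (hb : E.Orthogonal b) (hU : Monotone U) (n : ℕ) :
    E.psum (fun k => E.osum b (disjointed U k)) n = E.osum b (U n) := by
  induction n with
  | zero => simp only [psum, disjointed_zero]
  | succ n ih =>
    rw [psum, ih, hU.disjointed_add_one, (osum_union hb Finset.disjoint_sdiff).2,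
      Finset.union_sdiff_of_subset (hU (Nat.le_add_right n 1))]

lemma orthogonal_osum_disjointed (hb : E.Orthogonal b) (hU : Monotone U) :
    E.Orthogonal fun k => E.osum b (disjointed U k) := by
  intro n
  rw [psum_osum_disjointed hb hU]
  simp only [hU.disjointed_add_one]
  exact (osum_union hb Finset.disjoint_sdiff).1

lemma isOrthoSum_osum_disjointed (hb : E.IsOrthoSum b E.one) (hU : Monotone U)
    (hcover : ∀ N, ∃ n, Finset.range (N + 1) ⊆ U n) :
    E.IsOrthoSum (fun k => E.osum b (disjointed U k)) E.one := by
  refine ⟨orthogonal_osum_disjointed hb.1 hU, fun _ _ => E.le_one _, fun u hu => hb.2.2 u ?_⟩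
  rintro _ ⟨N, rfl⟩
  obtain ⟨n, hn⟩ := hcover N
  rw [← osum_range]
  exact E.le_trans (osum_le_osum hb.1 hn) (psum_osum_disjointed hb.1 hU n ▸ hu _ ⟨n, rfl⟩)

end Regrouping

section Measures

variable {E} {b : ℕ → L}

theorem tendsto_measure_sum_blocks {G : Type*} [AddCommGroup G] [TopologicalSpace G]
    [IsTopologicalAddGroup G] {μ : L → G} (hb : E.IsOrthoSum b E.one) (hμ : E.IsMeasure μ)
    (hσ : E.SigmaAdditive μ) {m : ℕ → ℕ} (hm : StrictMono m) {T : ℕ → Finset ℕ}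
    (hT : ∀ k, ↑(T k) ⊆ Set.Ioc (m k) (m (k + 1))) :
    Tendsto (fun k => ∑ n ∈ T k, μ (b n)) atTop (𝓝 0) := by
  -- regroup `b` as `b_{[0, m 0]}, b_{T 0}, b_{(m 0, m 1] \ T 0}, b_{T 1}, …`
  let U : ℕ → Finset ℕ := fun n =>
    Finset.range (m (n / 2) + 1) ∪ if n % 2 = 1 then T (n / 2) else ∅
  have hU_even : ∀ k, U (2 * k) = Finset.range (m k + 1) := fun k => by
    simp [U, Nat.mul_div_cancel_left k two_pos]
  have hU_odd : ∀ k, U (2 * k + 1) = Finset.range (m k + 1) ∪ T k := fun k => by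
    simp [U, show (2 * k + 1) / 2 = k by omega]
  have hU : Monotone U := by
    refine monotone_nat_of_le_succ fun n => ?_
    obtain ⟨k, rfl | rfl⟩ := Nat.even_or_odd' n
    · rw [hU_even, hU_odd]
      exact Finset.subset_union_left
    · rw [hU_odd, show 2 * k + 1 + 1 = 2 * (k + 1) by ring, hU_even]
      refine Finset.union_subset
        (Finset.range_subset_range.mpr (Nat.succ_le_succ (hm.monotone (Nat.le_add_right k 1))))
        fun n hn => Finset.mem_range_succ_iff.mpr (hT k hn).2
  have hcover : ∀ N, ∃ n, Finset.range (N + 1) ⊆ U n := fun N =>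
    ⟨2 * N, by rw [hU_even]; exact Finset.range_subset_range.mpr (Nat.succ_le_succ (hm.id_le N))⟩
  have hodd : ∀ k, disjointed U (2 * k + 1) = T k := fun k => by
    rw [hU.disjointed_add_one, hU_odd, hU_even, Finset.union_sdiff_left,
      Finset.sdiff_eq_self_of_disjoint]
    refine Finset.disjoint_left.mpr fun n hn hn' => ?_
    have := (hT k hn).1
    simp only [Finset.mem_range] at hn'
    omega
  have hterms :=
    tendsto_zero_of_tendsto_sum_range (hσ _ _ (isOrthoSum_osum_disjointed hb hU hcover))
  have hsub : Tendsto (fun k => 2 * k + 1) atTop atTop :=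
    StrictMono.tendsto_atTop fun _ _ h => by omega
  simpa [Function.comp_def, hodd, measure_osum hμ hb.1] using hterms.comp hsub

theorem summable_measure_of_isOrthoSum_one {G : Type*} [AddCommGroup G] [UniformSpace G]
    [IsUniformAddGroup G] [CompleteSpace G] {μ : L → G} (hb : E.IsOrthoSum b E.one)
    (hμ : E.IsMeasure μ) (hσ : E.SigmaAdditive μ) : Summable fun n => μ (b n) :=
  summable_of_tendsto_sum_blocks fun _ hm _ hT => tendsto_measure_sum_blocks hb hμ hσ hm hT

lemma IsNaturalBasis.eq_zero_or_eq_of_le (hb : E.IsNaturalBasis b) {c : L} {n : ℕ}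
    (hc : E.le c (b n)) : c = E.zero ∨ c = b n :=
  or_iff_not_imp_left.mpr fun h => (hb.2 n).2 c h hc

theorem norm_measure_le_tsum {G : Type*} [SeminormedAddCommGroup G] {μ : L → G}
    (hR : E.sRDP) (hb : E.IsNaturalBasis b) (hμ : E.IsMeasure μ) (hσ : E.SigmaAdditive μ)
    (hs : Summable fun n => ‖μ (b n)‖) (a : L) : ‖μ a‖ ≤ ∑' n, ‖μ (b n)‖ := by
  obtain ⟨c, hc, hcb⟩ := hR b E.one a hb.1 (E.le_one a)
  have hcn : ∀ n, ‖μ (c n)‖ ≤ ‖μ (b n)‖ := fun n => by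
    rcases hb.eq_zero_or_eq_of_le (hcb n) with h | h
    · simp [h, E.measure_zero hμ]
    · rw [h]
  refine le_of_tendsto (hσ c a hc).norm (Eventually.of_forall fun n => ?_)
  calc ‖∑ k ∈ Finset.range n, μ (c k)‖ ≤ ∑ k ∈ Finset.range n, ‖μ (c k)‖ := norm_sum_le _ _
    _ ≤ ∑ k ∈ Finset.range n, ‖μ (b k)‖ := Finset.sum_le_sum fun k _ => hcn k
    _ ≤ ∑' n, ‖μ (b n)‖ := hs.sum_le_tsum _ fun k _ => norm_nonneg _

end Measures

end EffectAlgebra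

open EffectAlgebra in
/-- On an effect algebra with the strong Riesz decomposition property and a natural
basis, every σ-additive measure with values in a finite-dimensional Banach space is
bounded. -/
theorem stmt9 {L : Type*} {X : Type*} [NormedAddCommGroup X] [NormedSpace ℝ X]
    [FiniteDimensional ℝ X] (E : EffectAlgebra L) (hR : E.sRDP)
    (b : ℕ → L) (hb : E.IsNaturalBasis b)
    (μ : L → X) (hμ : E.IsMeasure μ) (hσ : E.SigmaAdditive μ) :
    ∃ M : ℝ, ∀ a : L, ‖μ a‖ ≤ M := by
  have : CompleteSpace X := FiniteDimensional.complete ℝ X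
  have hs : Summable fun n => μ (b n) := summable_measure_of_isOrthoSum_one hb.1 hμ hσ
  exact ⟨_, norm_measure_le_tsum hR hb hμ hσ (summable_norm_iff.mpr hs)⟩
end

section
/- Let L be an effect algebra with the strong Riesz Decomposition Property admitting a natural basis (b_n), and let G be a complete normed abelian group. Then every absolutely additive measure μ : L → G is bounded. -/
open Filter Topology
open scoped ENNReal NNReal

namespace MyAux

open EffectAlgebra

variable {L : Type*} (E : EffectAlgebra L)

lemma compl_spec (a : L) : E.D a (E.compl a) ∧ E.add a (E.compl a) = E.one :=
  (E.orth a).choose_spec.1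

lemma assoc' {a b c : L} (hab : E.D a b) (h : E.D (E.add a b) c) :
    E.D b c ∧ E.D a (E.add b c) ∧ E.add (E.add a b) c = E.add a (E.add b c) := by
  have hc : E.D c (E.add a b) := E.comm_def h
  have hca : E.D c a := E.assoc_def₁ hab hc
  have hcab : E.D (E.add c a) b := E.assoc_def₂ hab hc
  have hbca : E.D b (E.add c a) := E.comm_def hcab
  have hbc : E.D b c := E.assoc_def₁ hca hbca
  have hbca2 : E.D (E.add b c) a := E.assoc_def₂ hca hbca
  refine ⟨hbc, E.comm_def hbca2, ?_⟩
  calc E.add (E.add a b) c = E.add c (E.add a b) := E.comm h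
    _ = E.add (E.add c a) b := (E.assoc hab hc).symm
    _ = E.add b (E.add c a) := E.comm hcab
    _ = E.add (E.add b c) a := (E.assoc hca hbca).symm
    _ = E.add a (E.add b c) := E.comm hbca2

lemma one_add_zero : E.D E.one E.zero ∧ E.add E.one E.zero = E.one := by
  obtain ⟨a', ⟨h1, h2⟩, _⟩ := E.orth E.one
  have h0 := E.zero_one h1
  subst h0
  exact ⟨h1, h2⟩

lemma D_zero (a : L) : E.D a E.zero := by
  obtain ⟨hD, hs⟩ := compl_spec E a
  have h10 : E.D (E.add a (E.compl a)) E.zero := by rw [hs]; exact (one_add_zero E).1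
  exact E.comm_def (E.assoc_def₁ hD (E.comm_def h10))

lemma add_zero' (a : L) : E.add a E.zero = a := by
  obtain ⟨hD, hs⟩ := compl_spec E a
  have hfa : E.D (E.compl a) a := E.comm_def hD
  have h1 : E.add (E.compl a) a = E.one := by rw [E.comm hfa]; exact hs
  have h0 : E.D (E.add (E.compl a) a) E.zero := by rw [h1]; exact (one_add_zero E).1
  obtain ⟨_, hD3, heq⟩ := assoc' E hfa h0
  have h2 : E.add (E.compl a) (E.add a E.zero) = E.one := by
    rw [← heq, h1, (one_add_zero E).2]
  obtain ⟨x, _, hu⟩ := E.orth (E.compl a)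
  exact (hu (E.add a E.zero) ⟨hD3, h2⟩).trans (hu a ⟨hfa, h1⟩).symm

lemma cancel {a b c : L} (hab : E.D a b) (hac : E.D a c) (h : E.add a b = E.add a c) :
    b = c := by
  set X := E.add a b with hX
  obtain ⟨hDX, hsX⟩ := compl_spec E X
  have hba : E.D b a := E.comm_def hab
  have hca : E.D c a := E.comm_def hac
  have h0 : E.D (E.add b a) (E.compl X) := by rw [E.comm hba]; exact hDX
  obtain ⟨_, hDb, heqb⟩ := assoc' E hba h0
  have hb1 : E.add b (E.add a (E.compl X)) = E.one := by
    rw [← heqb, E.comm hba, ← hX, hsX]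
  have h0c : E.D (E.add c a) (E.compl X) := by rw [E.comm hca, ← h]; exact hDX
  obtain ⟨_, hDc, heqc⟩ := assoc' E hca h0c
  have hc1 : E.add c (E.add a (E.compl X)) = E.one := by
    rw [← heqc, E.comm hca, ← h, hsX]
  obtain ⟨x, _, hu⟩ := E.orth (E.add a (E.compl X))
  have e1 := hu b ⟨E.comm_def hDb, by rw [E.comm (E.comm_def hDb)]; exact hb1⟩
  have e2 := hu c ⟨E.comm_def hDc, by rw [E.comm (E.comm_def hDc)]; exact hc1⟩
  exact e1.trans e2.symm

lemma le_refl' (a : L) : E.le a a := ⟨E.zero, D_zero E a, add_zero' E a⟩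

lemma le_one' (a : L) : E.le a E.one := ⟨E.compl a, (compl_spec E a).1, (compl_spec E a).2⟩

lemma eq_zero_of_le_zero {x : L} (h : E.le x E.zero) : x = E.zero := by
  obtain ⟨r, hD, hs⟩ := h
  have h1 : E.D (E.add x r) E.one := by
    rw [hs]; exact E.comm_def (one_add_zero E).1
  obtain ⟨hr1, _, _⟩ := assoc' E hD h1
  have hr0 : r = E.zero := E.zero_one (E.comm_def hr1)
  rw [hr0, add_zero' E x] at hs
  exact hs

lemma le_antisymm' {a b : L} (h1 : E.le a b) (h2 : E.le b a) : a = b := by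
  obtain ⟨r, hr, hrs⟩ := h1
  obtain ⟨s, hs, hss⟩ := h2
  have hD : E.D (E.add a r) s := by rw [hrs]; exact hs
  obtain ⟨hrs', hD2, heq⟩ := assoc' E hr hD
  have hkey : E.add a (E.add r s) = E.add a E.zero := by
    rw [← heq, hrs, hss, add_zero' E a]
  have h0 := cancel E hD2 (D_zero E a) hkey
  have hr0 : r = E.zero := eq_zero_of_le_zero E ⟨s, hrs', h0⟩
  rw [hr0, add_zero' E a] at hrs
  exact hrs

lemma rdp2 (hR : E.sRDP) {c d x : L} (hcd : E.D c d) (hx : E.le x (E.add c d)) :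
    ∃ x₁ x₂, E.D x₁ x₂ ∧ E.add x₁ x₂ = x ∧ E.le x₁ c ∧ E.le x₂ d := by
  set a : ℕ → L := fun n => if n = 0 then c else if n = 1 then d else E.zero with ha
  have ha0 : a 0 = c := rfl
  have ha1 : a 1 = d := rfl
  have haz : ∀ n, 2 ≤ n → a n = E.zero := by
    intro n hn
    simp only [ha]
    rw [if_neg (by omega), if_neg (by omega)]
  have hpsum : ∀ n, 1 ≤ n → E.psum a n = E.add c d := by
    intro n hn
    induction n with
    | zero => omega
    | succ m ih =>
      rcases Nat.eq_or_lt_of_le hn with h | h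
      · show E.add (E.psum a m) (a (m + 1)) = E.add c d
        have hm : m = 0 := by omega
        subst hm
        rw [ha1]; rfl
      · show E.add (E.psum a m) (a (m + 1)) = E.add c d
        rw [ih (by omega), haz (m + 1) (by omega), add_zero' E]
  have horth : E.Orthogonal a := by
    intro n
    match n with
    | 0 => exact hcd
    | n + 1 =>
      rw [hpsum (n + 1) (by omega), haz (n + 2) (by omega)]
      exact D_zero E _
  have hsum : E.IsOrthoSum a (E.add c d) := by
    refine ⟨horth, ?_, ?_⟩
    · rintro y ⟨n, rfl⟩
      match n with
      | 0 => exact ⟨d, hcd, rfl⟩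
      | n + 1 => rw [hpsum (n + 1) (by omega)]; exact le_refl' E _
    · intro u hu
      have := hu (E.psum a 1) ⟨1, rfl⟩
      rwa [hpsum 1 le_rfl] at this
  obtain ⟨c', ⟨horth', hub, hlub⟩, hle⟩ := hR a (E.add c d) x hsum hx
  have hz : ∀ n, 2 ≤ n → c' n = E.zero := by
    intro n hn
    apply eq_zero_of_le_zero E
    have := hle n
    rwa [haz n hn] at this
  have hps : ∀ n, 1 ≤ n → E.psum c' n = E.psum c' 1 := by
    intro n hn
    induction n with
    | zero => omega
    | succ m ih =>
      rcases Nat.eq_or_lt_of_le hn with h | h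
      · have hm : m = 0 := by omega
        subst hm; rfl
      · show E.add (E.psum c' m) (c' (m + 1)) = E.psum c' 1
        rw [ih (by omega), hz (m + 1) (by omega), add_zero' E]
  have hx1 : x = E.psum c' 1 := by
    apply le_antisymm' E
    · apply hlub
      rintro y ⟨n, rfl⟩
      match n with
      | 0 => exact ⟨c' 1, horth' 0, rfl⟩
      | n + 1 => rw [hps (n + 1) (by omega)]; exact le_refl' E _
    · exact hub _ ⟨1, rfl⟩
  refine ⟨c' 0, c' 1, horth' 0, hx1.symm, ?_, ?_⟩
  · have := hle 0; rwa [ha0] at this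
  · have := hle 1; rwa [ha1] at this

end MyAux

open EffectAlgebra in
/-- On an effect algebra with the strong Riesz decomposition property and a natural
basis, every absolutely additive measure with values in a complete normed abelian
group is bounded. -/
theorem stmt10 {L : Type*} {G : Type*} [NormedAddCommGroup G] [CompleteSpace G]
    (E : EffectAlgebra L) (hR : E.sRDP) (b : ℕ → L) (hb : E.IsNaturalBasis b)
    (μ : L → G) (hμ : E.IsMeasure μ)
    (habs : ∀ a : ℕ → L, E.Orthogonal a → Summable (fun n => ‖μ (a n)‖)) :
    ∃ M : ℝ, ∀ a : L, ‖μ a‖ ≤ M := by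
  classical
  by_contra hM
  push_neg at hM
  set Unb : L → Prop := fun e => ∀ M : ℝ, ∃ x, E.le x e ∧ M < ‖μ x‖ with hU
  have unb1 : Unb E.one := fun M => (hM M).imp fun a ha => ⟨MyAux.le_one' E a, ha⟩
  have split : ∀ e c r, E.D c r → E.add c r = e → Unb e → Unb c ∨ Unb r := by
    intro e c r hD hs he
    by_contra hcon
    push_neg at hcon
    obtain ⟨h1, h2⟩ := hcon
    simp only [hU, not_forall, not_exists, not_and, not_lt] at h1 h2
    obtain ⟨M1, hM1⟩ := h1
    obtain ⟨M2, hM2⟩ := h2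
    obtain ⟨x, hxe, hx⟩ := he (M1 + M2)
    rw [← hs] at hxe
    obtain ⟨x₁, x₂, hD', hs', hl1, hl2⟩ := MyAux.rdp2 E hR hD hxe
    have hmx : μ x = μ x₁ + μ x₂ := by rw [← hs']; exact hμ _ _ hD'
    have hxb : ‖μ x‖ ≤ M1 + M2 := by
      rw [hmx]
      exact (norm_add_le _ _).trans (add_le_add (hM1 _ hl1) (hM2 _ hl2))
    linarith
  have step : ∀ e, Unb e → ∃ d r, E.D d r ∧ E.add d r = e ∧ 1 ≤ ‖μ d‖ ∧ Unb r := by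
    intro e he
    obtain ⟨c, hce, hc⟩ := he (‖μ e‖ + 1)
    obtain ⟨r, hDr, hsr⟩ := hce
    have hme : μ e = μ c + μ r := by rw [← hsr]; exact hμ _ _ hDr
    rcases split e c r hDr hsr he with h | h
    · refine ⟨r, c, E.comm_def hDr, by rw [E.comm (E.comm_def hDr)]; exact hsr, ?_, h⟩
      have hrr : μ r = μ e - μ c := by rw [hme]; abel
      have h1 : ‖μ c‖ - ‖μ e‖ ≤ ‖μ c - μ e‖ := norm_sub_norm_le _ _
      have h2 : ‖μ c - μ e‖ = ‖μ r‖ := by rw [hrr, norm_sub_rev]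
      linarith
    · exact ⟨c, r, hDr, hsr, by linarith [norm_nonneg (μ e)], h⟩
  have key : ∀ p : {e : L // Unb e}, ∃ q : L × {e : L // Unb e},
      E.D q.1 (q.2 : L) ∧ E.add q.1 (q.2 : L) = (p : L) ∧ 1 ≤ ‖μ q.1‖ := by
    intro p
    obtain ⟨d, r, h1, h2, h3, h4⟩ := step p p.2
    exact ⟨(d, ⟨r, h4⟩), h1, h2, h3⟩
  choose f hf1 hf2 hf3 using key
  set en : ℕ → {e : L // Unb e} := fun n => (fun p => (f p).2)^[n] ⟨E.one, unb1⟩ with hen0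
  have hen : ∀ n, en (n + 1) = (f (en n)).2 := fun n =>
    Function.iterate_succ_apply' (fun p => (f p).2) n _
  set d : ℕ → L := fun n => (f (en n)).1 with hd
  have inv : ∀ n, E.D (E.psum d n) ((en (n + 1) : L)) ∧
      E.add (E.psum d n) ((en (n + 1) : L)) = E.one := by
    intro n
    induction n with
    | zero =>
      rw [hen 0]
      exact ⟨hf1 (en 0), hf2 (en 0)⟩
    | succ m ih =>
      obtain ⟨ih1, ih2⟩ := ih
      have h1 : E.D (d (m + 1)) ((en (m + 2) : L)) := by rw [hen (m + 1)]; exact hf1 _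
      have h2 : E.add (d (m + 1)) ((en (m + 2) : L)) = ((en (m + 1) : L)) := by
        rw [hen (m + 1)]; exact hf2 _
      have hD : E.D (E.psum d m) (E.add (d (m + 1)) ((en (m + 2) : L))) := by
        rw [h2]; exact ih1
      refine ⟨E.assoc_def₂ h1 hD, ?_⟩
      show E.add (E.add (E.psum d m) (d (m + 1))) _ = E.one
      rw [E.assoc h1 hD, h2]
      exact ih2
  have horth : E.Orthogonal d := by
    intro n
    obtain ⟨ih1, _⟩ := inv n
    have h2 : E.add (d (n + 1)) ((en (n + 2) : L)) = ((en (n + 1) : L)) := by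
      rw [hen (n + 1)]; exact hf2 _
    have h1 : E.D (d (n + 1)) ((en (n + 2) : L)) := by rw [hen (n + 1)]; exact hf1 _
    have hD : E.D (E.psum d n) (E.add (d (n + 1)) ((en (n + 2) : L))) := by
      rw [h2]; exact ih1
    exact E.assoc_def₁ h1 hD
  have hsum := habs d horth
  have h0 : Tendsto (fun n => ‖μ (d n)‖) atTop (𝓝 0) := hsum.tendsto_atTop_zero
  have hev : ∀ᶠ n in atTop, ‖μ (d n)‖ < 1 := h0.eventually_lt_const one_pos
  obtain ⟨n, hn⟩ := hev.exists
  have := hf3 (en n)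
  linarith
end

section
/- There exists an effect algebra L with the Vitali-Hahn-Saks property that fails the Nikodym property. -/
/-!
The example is the horizontal sum `MO` of countably many four-element Boolean algebras
`{0, x true n, x false n, 1}`; it is isomorphic to the paper's `{∅, ℕ} ∪ {Bₙ} ∪ {Bₙᶜ}`.
Two nonzero orthogonal elements always sum to `1`, to which nothing nonzero can be added, so
an orthogonal sequence has at most two nonzero terms and uniform exhaustivity holds for every
sequence of measures. The measures `μᵢ` with `μᵢ (x true i) = i`, `μᵢ (x false i) = -i` and
zero elsewhere are pointwise bounded, since each atom is charged by a single `μᵢ`, but not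
uniformly bounded.
-/

open Filter Topology
open scoped ENNReal NNReal

namespace EffectAlgebra

variable {L : Type*}

theorem IsMeasure.map_zero {G : Type*} [AddCancelCommMonoid G] {E : EffectAlgebra L}
    {μ : L → G} (hμ : E.IsMeasure μ) : μ E.zero = 0 := by
  obtain ⟨z, ⟨hz, hadd⟩, -⟩ := E.orth E.one
  obtain rfl := E.zero_one hz
  simpa [hadd] using hμ _ _ hz

theorem Orthogonal.eventually_eq_zero_of_height {E : EffectAlgebra L} (height : L → ℕ) (K : ℕ)
    (hK : ∀ a, height a ≤ K) (hle : ∀ p y, E.D p y → height p ≤ height (E.add p y))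
    (hlt : ∀ p y, E.D p y → y ≠ E.zero → height p < height (E.add p y))
    {a : ℕ → L} (ha : E.Orthogonal a) : ∀ᶠ n in atTop, a n = E.zero := by
  set f := fun n => height (E.psum a n)
  have hconst : ∀ᶠ n in atTop, f n = ⨆ k, f k := by
    have := tendsto_atTop_ciSup (monotone_nat_of_le_succ fun n => hle _ _ (ha n))
      ⟨K, by rintro _ ⟨n, rfl⟩; exact hK _⟩
    rwa [nhds_discrete, tendsto_pure] at this
  obtain ⟨N, hN⟩ := eventually_atTop.1 hconst
  refine eventually_atTop.2 ⟨N + 1, fun n hn => ?_⟩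
  obtain ⟨m, rfl⟩ : ∃ m, n = m + 1 := ⟨n - 1, by omega⟩
  by_contra hne
  have hstep : f m < f (m + 1) := hlt _ _ (ha m) hne
  have := hN m (by omega)
  have := hN (m + 1) (by omega)
  omega

theorem vhs_of_orthogonal_eventually_eq_zero {E : EffectAlgebra L}
    (h : ∀ a, E.Orthogonal a → ∀ᶠ n in atTop, a n = E.zero) : E.VHS := by
  intro μ hμ _ _ a ha
  rw [Metric.tendstoUniformly_iff]
  intro ε hε
  filter_upwards [h a ha] with n hn i
  simpa [hn, (hμ i).map_zero] using hε

end EffectAlgebra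

inductive MO : Type
  | zero | one | x (b : Bool) (n : ℕ)

namespace MO

def Orth : MO → MO → Prop
  | zero, _ | _, zero => True
  | x b n, x c m => n = m ∧ c = !b
  | _, _ => False

def add : MO → MO → MO
  | zero, a | a, zero => a
  | _, _ => one

def effectAlgebra : EffectAlgebra MO where
  D := Orth
  add := add
  zero := zero
  one := one
  comm_def := by
    rintro (_|_|⟨b, n⟩) (_|_|⟨c, m⟩) <;> simp [Orth]
    rintro rfl rfl
    simp
  comm := by
    rintro (_|_|⟨b, n⟩) (_|_|⟨c, m⟩) <;> simp [Orth, add]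
  assoc_def₁ := by
    rintro (_|_|⟨b, n⟩) (_|_|⟨c, m⟩) (_|_|⟨d, k⟩) <;> simp [Orth, add]
  assoc_def₂ := by
    rintro (_|_|⟨b, n⟩) (_|_|⟨c, m⟩) (_|_|⟨d, k⟩) <;> simp [Orth, add]
  assoc := by
    rintro (_|_|⟨b, n⟩) (_|_|⟨c, m⟩) (_|_|⟨d, k⟩) <;> simp [Orth, add]
  orth := by
    rintro (_|_|⟨b, n⟩)
    · exact ⟨one, by simp [Orth, add], by rintro (_|_|_) <;> simp [Orth, add]⟩
    · exact ⟨zero, by simp [Orth, add], by rintro (_|_|_) <;> simp [Orth, add]⟩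
    · exact ⟨x (!b) n, by simp [Orth, add], by rintro (_|_|_) <;> simp [Orth, add]; grind⟩
  zero_one := by
    rintro (_|_|_) <;> simp [Orth]

def height : MO → ℕ
  | zero => 0
  | x _ _ => 1
  | one => 2

theorem orthogonal_eventually_eq_zero {a : ℕ → MO} (ha : effectAlgebra.Orthogonal a) :
    ∀ᶠ n in atTop, a n = zero :=
  ha.eventually_eq_zero_of_height height 2 (by rintro (_|_|_) <;> simp [height])
    (by rintro (_|_|_) (_|_|_) <;> simp [effectAlgebra, Orth, add, height])
    (by rintro (_|_|_) (_|_|_) <;> simp [effectAlgebra, Orth, add, height])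

noncomputable def testMeasure (i : ℕ) : MO → ℝ
  | x b n => if n = i then (if b then (i : ℝ) else -i) else 0
  | _ => 0

theorem isMeasure_testMeasure (i : ℕ) : effectAlgebra.IsMeasure (testMeasure i) := by
  rintro (_|_|⟨b, n⟩) (_|_|⟨c, m⟩) <;> simp [effectAlgebra, Orth, add, testMeasure]
  rintro rfl rfl
  cases b <;> by_cases h : n = i <;> simp [h]

theorem abs_testMeasure_le (i : ℕ) (a : MO) : |testMeasure i a| ≤ i := by
  rcases a with _|_|⟨b, n⟩ <;> simp only [testMeasure] <;> (try split_ifs) <;> simp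

theorem exists_abs_testMeasure_le (a : MO) : ∃ M, ∀ i, |testMeasure i a| ≤ M := by
  rcases a with _|_|⟨b, n⟩
  · exact ⟨0, by simp [testMeasure]⟩
  · exact ⟨0, by simp [testMeasure]⟩
  · refine ⟨n, fun i => ?_⟩
    simp only [testMeasure]
    split_ifs <;> simp [*]

theorem vhs : effectAlgebra.VHS :=
  EffectAlgebra.vhs_of_orthogonal_eventually_eq_zero fun _ => orthogonal_eventually_eq_zero

theorem not_nikodym : ¬ effectAlgebra.Nikodym := by
  intro h
  obtain ⟨M, hM⟩ := h testMeasure isMeasure_testMeasure (fun i => ⟨i, abs_testMeasure_le i⟩)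
    exists_abs_testMeasure_le
  obtain ⟨i, hi⟩ := exists_nat_gt M
  have := hM i (x true i)
  simp only [testMeasure, ↓reduceIte, Nat.abs_cast] at this
  linarith

end MO

open EffectAlgebra in
/-- There is an effect algebra with the Vitali–Hahn–Saks property failing the
Nikodym property. -/
theorem stmt13 : ∃ (L : Type) (E : EffectAlgebra L), E.VHS ∧ ¬ E.Nikodym :=
  ⟨MO, MO.effectAlgebra, MO.vhs, MO.not_nikodym⟩
end

section
/- Let L be a natural effect algebra. If L has the σ-Vitali-Hahn-Saks property, then L has the σ-Nikodym property. -/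
open Filter Topology
open scoped ENNReal NNReal

open Filter in
private lemma aux_bad_seq {L : Type*} (E : EffectAlgebra L) (B : Set L)
    (hcl : ∀ b ∈ B, ∀ c ∈ B, E.D b c → E.add b c ∈ B)
    (b₀ : L) (hb₀ : b₀ ∈ B) (μ : ℕ → L → ℝ)
    (H : ∀ b ∈ B, ∀ M : ℝ, ∃ i c, c ∈ B ∧ E.D c b ∧ M < |μ i c|) :
    ∃ (ii : ℕ → ℕ) (cc : ℕ → L), E.Orthogonal cc ∧
      ∀ n : ℕ, (n : ℝ) + 2 < |μ (ii (n+1)) (cc (n+1))| := by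
  classical
  have key : ∀ s : L, s ∈ B → ∀ M : ℝ,
      ∃ p : ℕ × L, p.2 ∈ B ∧ E.D p.2 s ∧ M < |μ p.1 p.2| := by
    intro s hs M
    obtain ⟨i, c, hc, hD, hM⟩ := H s hs M
    exact ⟨(i, c), hc, hD, hM⟩
  obtain ⟨F, hFspec⟩ : ∃ F : L → ℝ → ℕ × L, ∀ s, s ∈ B → ∀ M : ℝ,
      (F s M).2 ∈ B ∧ E.D (F s M).2 s ∧ M < |μ (F s M).1 (F s M).2| := by
    refine ⟨fun s M => if h : s ∈ B then (key s h M).choose else (0, E.zero), ?_⟩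
    intro s hs M
    simp only [dif_pos hs]
    exact (key s hs M).choose_spec
  obtain ⟨g, hg0, hgs⟩ : ∃ g : ℕ → ℕ × L × L, g 0 = (0, b₀, b₀) ∧
      ∀ n, g (n+1) = ((F (g n).2.2 ((n : ℝ) + 2)).1, (F (g n).2.2 ((n : ℝ) + 2)).2,
        E.add (g n).2.2 (F (g n).2.2 ((n : ℝ) + 2)).2) :=
    ⟨fun n => Nat.rec (0, b₀, b₀)
      (fun n p => ((F p.2.2 ((n : ℝ) + 2)).1, (F p.2.2 ((n : ℝ) + 2)).2,
        E.add p.2.2 (F p.2.2 ((n : ℝ) + 2)).2)) n, rfl, fun n => rfl⟩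
  set ii : ℕ → ℕ := fun n => (g n).1 with hii
  set cc : ℕ → L := fun n => (g n).2.1 with hcc
  have hcc0 : cc 0 = b₀ := by simp [hcc, hg0]
  have hccn : ∀ n, cc (n+1) = (F (g n).2.2 ((n : ℝ) + 2)).2 := by
    intro n; simp [hcc, hgs n]
  have hiin : ∀ n, ii (n+1) = (F (g n).2.2 ((n : ℝ) + 2)).1 := by
    intro n; simp [hii, hgs n]
  have inv : ∀ n, (g n).2.2 = E.psum cc n ∧ E.psum cc n ∈ B := by
    intro n
    induction n with
    | zero =>
      have h0 : E.psum cc 0 = b₀ := hcc0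
      constructor
      · rw [h0, hg0]
      · rw [h0]; exact hb₀
    | succ n ih =>
      obtain ⟨h1, h2⟩ := ih
      have hmem : (g n).2.2 ∈ B := h1 ▸ h2
      obtain ⟨hcB, hD, _⟩ := hFspec (g n).2.2 hmem ((n : ℝ) + 2)
      have hps : E.psum cc (n+1) = E.add (E.psum cc n) (cc (n+1)) := rfl
      have h3 : (g (n+1)).2.2 = E.psum cc (n+1) := by
        rw [hps, ← h1, hccn n, hgs n]
      refine ⟨h3, ?_⟩
      rw [hps, hccn n]
      refine hcl (E.psum cc n) h2 _ hcB (E.comm_def ?_)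
      rw [← h1]; exact hD
  refine ⟨ii, cc, ?_, ?_⟩
  · intro n
    obtain ⟨h1, h2⟩ := inv n
    have hmem : (g n).2.2 ∈ B := h1 ▸ h2
    obtain ⟨_, hD, _⟩ := hFspec (g n).2.2 hmem ((n : ℝ) + 2)
    rw [← h1, hccn n]
    exact E.comm_def hD
  · intro n
    obtain ⟨h1, h2⟩ := inv n
    have hmem : (g n).2.2 ∈ B := h1 ▸ h2
    obtain ⟨_, _, hM⟩ := hFspec (g n).2.2 hmem ((n : ℝ) + 2)
    rw [hccn n, hiin n]
    exact hM

open EffectAlgebra in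
/-- For natural effect algebras, the σ-Vitali–Hahn–Saks property implies the
σ-Nikodym property. -/
theorem stmt14 {L : Type*} (E : EffectAlgebra L) (hnat : E.Natural)
    (hVHS : E.SigmaVHS) : E.SigmaNikodym := by
  intro μ hmeas hsig hbdd hpt
  classical
  obtain ⟨B, hgen, hcl, hbd⟩ := hnat
  -- it suffices to bound μ uniformly on some slice of B
  suffices hsl : ∃ b ∈ B, ∃ M : ℝ, ∀ i, ∀ c ∈ {c ∈ B | E.D c b}, |μ i c| ≤ M by
    obtain ⟨b, hbB, M, hM⟩ := hsl
    have hpt' : ∀ a : L, ∃ M, ∀ i, ‖μ i a‖ ≤ M := by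
      simpa [Real.norm_eq_abs] using hpt
    have := (hbd b hbB ℝ μ hmeas hsig hpt').mp
      ⟨M, by simpa [Real.norm_eq_abs] using hM⟩
    simpa [Real.norm_eq_abs] using this
  by_contra hcon
  push_neg at hcon
  -- get a starting element of B
  obtain ⟨b, hbB, -, -⟩ := hgen E.zero
  have H : ∀ s ∈ B, ∀ M : ℝ, ∃ i c, c ∈ B ∧ E.D c s ∧ M < |μ i c| := by
    intro s hs M
    obtain ⟨i, c, hc, hM⟩ := hcon s hs M
    obtain ⟨hcB, hcD⟩ := hc
    exact ⟨i, c, hcB, hcD, hM⟩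
  obtain ⟨ii, cc, horth, hgrow⟩ := aux_bad_seq E B hcl (b 0) (hbB 0) μ H
  -- rescale the measures
  set ν : ℕ → L → ℝ := fun k a => μ (ii k) a / ((k : ℝ) + 1) with hν
  have hkpos : ∀ k : ℕ, (0 : ℝ) < (k : ℝ) + 1 := by
    intro k; positivity
  have habs : ∀ k a, |ν k a| = |μ (ii k) a| / ((k : ℝ) + 1) := by
    intro k a
    rw [hν]
    exact (abs_div _ _).trans (by rw [abs_of_pos (hkpos k)])
  have hνmeas : ∀ k, E.IsMeasure (ν k) := by
    intro k a c hD
    simp only [hν, hmeas (ii k) a c hD, add_div]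
  have hνsig : ∀ k, E.SigmaAdditive (ν k) := by
    intro k a s hs
    have := (hsig (ii k) a s hs).div_const ((k : ℝ) + 1)
    simpa only [Finset.sum_div] using this
  have hνbdd : ∀ k, ∃ M, ∀ a, |ν k a| ≤ M := by
    intro k
    obtain ⟨M, hM⟩ := hbdd (ii k)
    refine ⟨M, fun a => ?_⟩
    calc |ν k a| = |μ (ii k) a| / ((k : ℝ) + 1) := habs k a
      _ ≤ |μ (ii k) a| := div_le_self (abs_nonneg _)
          (by have : (0:ℝ) ≤ (k:ℝ) := Nat.cast_nonneg k; linarith)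
      _ ≤ M := hM a
  have hνconv : PtwiseConv ν := by
    intro a
    obtain ⟨M, hM⟩ := hpt a
    refine ⟨0, squeeze_zero_norm (a := fun k : ℕ => M / ((k : ℝ) + 1)) (fun k => ?_) ?_⟩
    · show ‖ν k a‖ ≤ M / ((k : ℝ) + 1)
      rw [Real.norm_eq_abs, habs k a]
      gcongr
      exact hM (ii k)
    · exact Tendsto.div_atTop tendsto_const_nhds
        (tendsto_atTop_add_const_right atTop 1 tendsto_natCast_atTop_atTop)
  -- σ-VHS gives uniform exhaustivity, contradicting the growth of |ν n (cc n)|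
  have hue := hVHS ν hνmeas hνsig hνbdd hνconv cc horth
  rw [Metric.tendstoUniformly_iff] at hue
  have hev := hue 1 one_pos
  rw [eventually_atTop] at hev
  obtain ⟨N, hN⟩ := hev
  have h1 := hN (N+1) (Nat.le_succ N) (N+1)
  rw [Real.dist_eq, zero_sub, abs_neg] at h1
  have h2 := hgrow N
  have h3 : (1 : ℝ) < |ν (N+1) (cc (N+1))| := by
    rw [habs]
    rw [one_lt_div (by positivity)]
    push_cast
    linarith
  linarith
end
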